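/- arXiv:1004.0875 — 6 statements merged into one kernel-verified Lean document; each statement's English description precedes it below -/
import Mathlib

section
/- Let H be a Hopf algebra over a commutative ring k and A a unital associative k-algebra with a left H-module algebra action ▷ admitting a momentum map J. For 𝖺 ∈ Gl(H,A) define 𝖺_J(g) := J(S(g₁)) 𝖺(g₂) J(g₃) (the convolution product (J∘S) * 𝖺 * J). Then 𝖺_J(g) lies in the center Z(A) for every g ∈ H, and 𝖺_J : H → Z(A) is a unital algebra homomorphism: 𝖺_J(1_H) = 1_A and 𝖺_J(gh) = 𝖺_J(g)𝖺_J(h) for all g,h ∈ H. -/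
open scoped TensorProduct

noncomputable section

namespace EquivariantMorita

/-- The Sweedler-type map `h ↦ μ (f h₍₁₎) (g h₍₂₎)` (with implicit summation over the
Sweedler decomposition `Δ h = h₍₁₎ ⊗ h₍₂₎` of the comultiplication). -/
def sw (k : Type*) {H M N P : Type*} [CommRing k]
    [AddCommGroup H] [Module k H] [Coalgebra k H]
    [AddCommGroup M] [Module k M] [AddCommGroup N] [Module k N]
    [AddCommGroup P] [Module k P]
    (μ : M →ₗ[k] N →ₗ[k] P) (f : H →ₗ[k] M) (g : H →ₗ[k] N) : H →ₗ[k] P :=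
  TensorProduct.lift μ ∘ₗ TensorProduct.map f g ∘ₗ (Coalgebra.comul : H →ₗ[k] H ⊗[k] H)

/-- The convolution-type map `h ↦ f (h₍₁₎) * g (h₍₂₎)`. -/
def swMul (k : Type*) {H A : Type*} [CommRing k]
    [AddCommGroup H] [Module k H] [Coalgebra k H] [Ring A] [Algebra k A]
    (f g : H →ₗ[k] A) : H →ₗ[k] A :=
  sw k (LinearMap.mul k A) f g

section ModuleAlgebra

variable (k : Type*) [CommRing k] {H : Type*} [Ring H] [HopfAlgebra k H]
variable {A : Type*} [Ring A] [Algebra k A]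

/-- `act : H × A → A` (given as a `k`-bilinear map) makes `A` a left `H`-module algebra:
`(gh) ▷ a = g ▷ (h ▷ a)`, `1 ▷ a = a`, `h ▷ (ab) = (h₍₁₎ ▷ a)(h₍₂₎ ▷ b)` and
`h ▷ 1 = ε(h) 1`. -/
structure IsModuleAlgebraAction (act : H →ₗ[k] A →ₗ[k] A) : Prop where
  mul_act : ∀ (g h : H) (a : A), act (g * h) a = act g (act h a)
  one_act : ∀ a : A, act 1 a = a
  act_mul : ∀ (h : H) (a b : A), act h (a * b) = swMul k (act.flip a) (act.flip b) h
  act_one : ∀ h : H, act h 1 = Coalgebra.counit (R := k) h • (1 : A)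

/-- Membership in `Gl(H,A)`: (i) `𝖺(1) = 1`, (ii) `𝖺(gh) = 𝖺(g₍₁₎)(g₍₂₎ ▷ 𝖺(h))`,
(iii) `(h₍₁₎ ▷ b) 𝖺(h₍₂₎) = 𝖺(h₍₁₎)(h₍₂₎ ▷ b)`. -/
structure MemGl (act : H →ₗ[k] A →ₗ[k] A) (a : H →ₗ[k] A) : Prop where
  map_one' : a 1 = 1
  map_mul' : ∀ g h : H, a (g * h) = swMul k a (act.flip (a h)) g
  comm' : ∀ (h : H) (b : A), swMul k (act.flip b) a h = swMul k a (act.flip b) h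

/-- `J` is a momentum map for the action `act`: it is a unital algebra homomorphism
`H → A` with `h ▷ a = J(h₍₁₎) a J(S(h₍₂₎))`. -/
structure IsMomentumMap (act : H →ₗ[k] A →ₗ[k] A) (J : H →ₗ[k] A) : Prop where
  map_one' : J 1 = 1
  map_mul' : ∀ g h : H, J (g * h) = J g * J h
  inner' : ∀ (h : H) (a : A),
    act h a = swMul k J (LinearMap.mul k A a ∘ₗ (J ∘ₗ HopfAlgebra.antipode (R := k))) h

end ModuleAlgebra

end EquivariantMorita

namespace EquivariantMorita

section CenterMaps

variable (k : Type*) [CommRing k]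
variable {H : Type*} [Ring H] [HopfAlgebra k H]
variable {A : Type*} [Ring A] [Algebra k A]

/-- `𝖺_J : g ↦ J(S(g₍₁₎)) 𝖺(g₍₂₎) J(g₍₃₎)`, i.e. the convolution `(J ∘ S) * (𝖺 * J)`. -/
def toCenterMap (J a : H →ₗ[k] A) : H →ₗ[k] A :=
  swMul k (J ∘ₗ HopfAlgebra.antipode (R := k)) (swMul k a J)

/-- `𝗓 ↦ (g ↦ J(g₍₁₎) 𝗓(g₍₂₎) J(S(g₍₃₎)))`, i.e. the convolution `J * (𝗓 * (J ∘ S))`. -/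
def ofCenterMap (J z : H →ₗ[k] A) : H →ₗ[k] A :=
  swMul k J (swMul k z (J ∘ₗ HopfAlgebra.antipode (R := k)))

end CenterMaps

end EquivariantMorita

/-!
In the convolution ring `WithConv (H →ₗ[k] A)` the map `𝖺_J` is `(J ∘ S) * 𝖺 * J`, and `J ∘ S` is
the convolution inverse of `J`. The momentum map writes `(· ▷ b)` as `J * (b • (J ∘ S))`, so
`(· ▷ b) * J = J(·) b` and `(J ∘ S) * (· ▷ b) = b (J ∘ S)(·)`; axiom (iii) of `Gl(H,A)` says that
`(· ▷ b)` commutes with `𝖺`, and these three facts carry `b` from the right of `𝖺_J` to its left.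

Multiplicativity is read off in the convolution ring of `H ⊗ H`: precomposition with the
coalgebra maps `m, p₁, p₂ : H ⊗ H → H` (multiplication and the two counit projections) is a ring
homomorphism, and writing `fᵢ = f ∘ pᵢ`, the axioms become `J ∘ m = J₁ * J₂`,
`(J ∘ S) ∘ m = (J ∘ S)₂ * (J ∘ S)₁` and `𝖺 ∘ m = 𝖺₁ * J₁ * 𝖺₂ * (J ∘ S)₁`. Hence
`𝖺_J ∘ m = (J ∘ S)₂ * (𝖺_J)₁ * 𝖺₂ * J₂`, and since `(𝖺_J)₁` has central values it passes
`(J ∘ S)₂`, leaving `(𝖺_J)₁ * (𝖺_J)₂ = (g ⊗ h ↦ 𝖺_J(g) 𝖺_J(h))`.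
-/

open WithConv TensorProduct

section Convolution

variable {k : Type*} [CommSemiring k] {A : Type*} [Semiring A] [Algebra k A]
  {B C D : Type*} [AddCommMonoid B] [Module k B] [Coalgebra k B]
  [AddCommMonoid C] [Module k C] [Coalgebra k C] [AddCommMonoid D] [Module k D] [Coalgebra k D]

lemma Coalgebra.Repr.sum_counit_right_smul {ι : Type*} {c : C} (𝓡 : Coalgebra.Repr k c ι) :
    ∑ i ∈ 𝓡.index, Coalgebra.counit (R := k) (𝓡.right i) • 𝓡.left i = c := by
  simpa only [map_sum, _root_.TensorProduct.rid_tmul, one_smul] using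
    congr(_root_.TensorProduct.rid k C $(Coalgebra.sum_tmul_counit_eq 𝓡))

def CoalgHom.convComp (φ : B →ₗc[k] C) : WithConv (C →ₗ[k] A) →+* WithConv (B →ₗ[k] A) where
  toFun f := toConv (f.ofConv ∘ₗ φ.toLinearMap)
  map_one' := by ext; simp
  map_mul' f g := congrArg toConv (LinearMap.convMul_comp_coalgHom_distrib f g φ)
  map_zero' := rfl
  map_add' _ _ := rfl

@[simp]
lemma CoalgHom.convComp_apply (φ : B →ₗc[k] C) (f : WithConv (C →ₗ[k] A)) (b : B) :
    φ.convComp f b = f (φ b) := rfl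

namespace Coalgebra.TensorProduct

variable (k C D) in
def fst : C ⊗[k] D →ₗc[k] C :=
  (Coalgebra.TensorProduct.rid k k C).toCoalgHom.comp
    (Coalgebra.TensorProduct.map (CoalgHom.id k C) (Coalgebra.counitCoalgHom k D))

variable (k C D) in
def snd : C ⊗[k] D →ₗc[k] D :=
  (Coalgebra.TensorProduct.lid k D).toCoalgHom.comp
    (Coalgebra.TensorProduct.map (Coalgebra.counitCoalgHom k C) (CoalgHom.id k D))

@[simp]
lemma fst_tmul (c : C) (d : D) : fst k C D (c ⊗ₜ d) = Coalgebra.counit (R := k) d • c := rfl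

@[simp]
lemma snd_tmul (c : C) (d : D) : snd k C D (c ⊗ₜ d) = Coalgebra.counit (R := k) c • d := rfl

lemma convComp_fst_mul_convComp_snd_tmul (f : WithConv (C →ₗ[k] A))
    (g : WithConv (D →ₗ[k] A)) (c : C) (d : D) :
    ((fst k C D).convComp f * (snd k C D).convComp g) (c ⊗ₜ d) = f c * g d := by
  rw [LinearMap.convMul_apply, TensorProduct.comul_tmul, ← (ℛ k c).eq, ← (ℛ k d).eq]
  conv_rhs => rw [← (ℛ k c).sum_counit_right_smul, ← Coalgebra.sum_counit_smul (ℛ k d),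
    map_sum, map_sum, Finset.sum_mul_sum]
  simp only [sum_tmul, tmul_sum, map_sum, AlgebraTensorModule.tensorTensorTensorComm_tmul,
    _root_.TensorProduct.map_tmul, CoalgHom.convComp_apply, fst_tmul, snd_tmul, map_smul,
    LinearMap.mul'_apply, smul_mul_smul_comm]
  conv_lhs => rw [Finset.sum_comm]
  simp only [mul_comm]

lemma convComp_snd_mul_convComp_fst_tmul (f : WithConv (D →ₗ[k] A))
    (g : WithConv (C →ₗ[k] A)) (c : C) (d : D) :
    ((snd k C D).convComp f * (fst k C D).convComp g) (c ⊗ₜ d) = f d * g c := by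
  rw [LinearMap.convMul_apply, TensorProduct.comul_tmul, ← (ℛ k c).eq, ← (ℛ k d).eq]
  conv_rhs => rw [← (ℛ k d).sum_counit_right_smul, ← Coalgebra.sum_counit_smul (ℛ k c),
    map_sum, map_sum, Finset.sum_mul_sum]
  simp only [sum_tmul, tmul_sum, map_sum, AlgebraTensorModule.tensorTensorTensorComm_tmul,
    _root_.TensorProduct.map_tmul, CoalgHom.convComp_apply, fst_tmul, snd_tmul, map_smul,
    LinearMap.mul'_apply, smul_mul_smul_comm]
  simp only [mul_comm]

lemma convComp_fst_mul_comp_mk_flip (f : WithConv (C →ₗ[k] A))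
    (G : WithConv (C ⊗[k] D →ₗ[k] A)) (d : D) :
    toConv (((fst k C D).convComp f * G).ofConv ∘ₗ (_root_.TensorProduct.mk k C D).flip d) =
      f * toConv (G.ofConv ∘ₗ (_root_.TensorProduct.mk k C D).flip d) := by
  ext c
  rw [(ℛ k c).convMul_apply]
  simp only [LinearMap.coe_comp, Function.comp_apply, LinearMap.flip_apply, mk_apply]
  rw [LinearMap.convMul_apply, TensorProduct.comul_tmul, ← (ℛ k c).eq, ← (ℛ k d).eq]
  conv_rhs => rw [← Coalgebra.sum_counit_smul (ℛ k d)]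
  simp only [sum_tmul, tmul_sum, map_sum, AlgebraTensorModule.tensorTensorTensorComm_tmul,
    _root_.TensorProduct.map_tmul, CoalgHom.convComp_apply, fst_tmul, map_smul,
    LinearMap.mul'_apply, smul_mul_assoc, Finset.mul_sum, tmul_smul, mul_smul_comm]
  rw [Finset.sum_comm]

lemma commute_convComp_fst_convComp_snd {f : WithConv (C →ₗ[k] A)} {g : WithConv (D →ₗ[k] A)}
    (h : ∀ c d, Commute (f c) (g d)) :
    Commute ((fst k C D).convComp f) ((snd k C D).convComp g) := by
  refine WithConv.ext (_root_.TensorProduct.ext' fun c d => ?_)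
  exact (convComp_fst_mul_convComp_snd_tmul f g c d).trans
    ((h c d).eq.trans (convComp_snd_mul_convComp_fst_tmul g f c d).symm)

end Coalgebra.TensorProduct

end Convolution

namespace EquivariantMorita

open Coalgebra.TensorProduct

section

variable {k : Type*} [CommRing k] {H : Type*} [Ring H] [HopfAlgebra k H]
  {A : Type*} [Ring A] [Algebra k A] {act : H →ₗ[k] A →ₗ[k] A} {J a : H →ₗ[k] A}

lemma toConv_toCenterMap :
    toConv (toCenterMap k J a) =
      toConv (J ∘ₗ HopfAlgebra.antipode k) * toConv a * toConv J :=
  (mul_assoc _ _ _).symm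

namespace IsMomentumMap

def toAlgHom (hJ : IsMomentumMap k act J) : H →ₐ[k] A :=
  AlgHom.ofLinearMap J hJ.map_one' hJ.map_mul'

lemma antipode_convMul_self (hJ : IsMomentumMap k act J) :
    toConv (J ∘ₗ HopfAlgebra.antipode k) * toConv J = 1 := by
  have h := LinearMap.algHom_comp_convMul_distrib hJ.toAlgHom
    (toConv (HopfAlgebra.antipode k)) (toConv LinearMap.id)
  rw [LinearMap.antipode_mul_id] at h
  refine (congrArg toConv h).symm.trans ?_
  ext x
  simp

lemma toConv_act_flip (hJ : IsMomentumMap k act J) (b : A) :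
    toConv (act.flip b) = toConv J * (b • toConv (J ∘ₗ HopfAlgebra.antipode k)) :=
  WithConv.ext (LinearMap.ext fun h => hJ.inner' h b)

lemma act_flip_convMul_self (hJ : IsMomentumMap k act J) (b : A) :
    toConv (act.flip b) * toConv J = MulOpposite.op b • toConv J := by
  have hb : b • (1 : WithConv (H →ₗ[k] A)) = MulOpposite.op b • 1 := by
    ext x
    simp [Algebra.commutes]
  rw [hJ.toConv_act_flip, mul_assoc, smul_mul_assoc, hJ.antipode_convMul_self, hb,
    mul_smul_comm, mul_one]

lemma antipode_convMul_act_flip (hJ : IsMomentumMap k act J) (b : A) :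
    toConv (J ∘ₗ HopfAlgebra.antipode k) * toConv (act.flip b) =
      b • toConv (J ∘ₗ HopfAlgebra.antipode k) := by
  rw [hJ.toConv_act_flip, ← mul_assoc, hJ.antipode_convMul_self, one_mul]

end IsMomentumMap

lemma MemGl.commute_act_flip (ha : MemGl k act a) (b : A) :
    Commute (toConv (act.flip b)) (toConv a) :=
  WithConv.ext (LinearMap.ext fun h => ha.comm' h b)

lemma op_smul_toConv_toCenterMap (hJ : IsMomentumMap k act J) (ha : MemGl k act a) (b : A) :
    MulOpposite.op b • toConv (toCenterMap k J a) = b • toConv (toCenterMap k J a) := by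
  set s := toConv (J ∘ₗ HopfAlgebra.antipode k)
  set β := toConv (act.flip b)
  calc MulOpposite.op b • toConv (toCenterMap k J a)
      = s * toConv a * (β * toConv J) := by
        rw [toConv_toCenterMap, ← mul_smul_comm, hJ.act_flip_convMul_self]
    _ = s * (toConv a * β) * toConv J := by noncomm_ring
    _ = s * β * toConv a * toConv J := by rw [← (ha.commute_act_flip b).eq]; noncomm_ring
    _ = b • toConv (toCenterMap k J a) := by
        rw [hJ.antipode_convMul_act_flip, toConv_toCenterMap, smul_mul_assoc, smul_mul_assoc]

lemma toCenterMap_mul_comm (hJ : IsMomentumMap k act J) (ha : MemGl k act a) (g : H) (b : A) :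
    toCenterMap k J a g * b = b * toCenterMap k J a g := by
  simpa using congr($(op_smul_toConv_toCenterMap hJ ha b) g)

lemma IsMomentumMap.convComp_mulCoalgHom (hJ : IsMomentumMap k act J) :
    (Bialgebra.mulCoalgHom k H).convComp (toConv J) =
      (fst k H H).convComp (toConv J) * (snd k H H).convComp (toConv J) :=
  WithConv.ext <| _root_.TensorProduct.ext' fun x y =>
    (hJ.map_mul' x y).trans (convComp_fst_mul_convComp_snd_tmul _ _ x y).symm

lemma IsMomentumMap.convComp_mulCoalgHom_antipode (hJ : IsMomentumMap k act J) :
    (Bialgebra.mulCoalgHom k H).convComp (toConv (J ∘ₗ HopfAlgebra.antipode k)) =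
      (snd k H H).convComp (toConv (J ∘ₗ HopfAlgebra.antipode k)) *
        (fst k H H).convComp (toConv (J ∘ₗ HopfAlgebra.antipode k)) := by
  refine WithConv.ext <| _root_.TensorProduct.ext' fun x y => ?_
  rw [convComp_snd_mul_convComp_fst_tmul]
  simp [HopfAlgebra.antipode_mul_antidistrib, hJ.map_mul']

lemma MemGl.convComp_mulCoalgHom (hJ : IsMomentumMap k act J) (ha : MemGl k act a) :
    (Bialgebra.mulCoalgHom k H).convComp (toConv a) =
      (fst k H H).convComp (toConv a) * ((fst k H H).convComp (toConv J) *
        ((snd k H H).convComp (toConv a) *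
          (fst k H H).convComp (toConv (J ∘ₗ HopfAlgebra.antipode k)))) := by
  set G := (fst k H H).convComp (toConv J) * ((snd k H H).convComp (toConv a) *
    (fst k H H).convComp (toConv (J ∘ₗ HopfAlgebra.antipode k)))
  refine WithConv.ext <| _root_.TensorProduct.ext' fun x y => ?_
  have slice : toConv (G.ofConv ∘ₗ (_root_.TensorProduct.mk k H H).flip y) =
      toConv (act.flip (a y)) := by
    rw [convComp_fst_mul_comp_mk_flip, hJ.toConv_act_flip]
    congr 1
    ext z
    exact convComp_snd_mul_convComp_fst_tmul _ _ z y
  calc a (x * y) = (toConv a * toConv (act.flip (a y))) x := ha.map_mul' x y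
    _ = (toConv a * toConv (G.ofConv ∘ₗ (_root_.TensorProduct.mk k H H).flip y)) x := by
      rw [slice]
    _ = ((fst k H H).convComp (toConv a) * G) (x ⊗ₜ y) :=
      congr($(convComp_fst_mul_comp_mk_flip (toConv a) G y) x).symm

lemma toCenterMap_mul (hJ : IsMomentumMap k act J) (ha : MemGl k act a) (g h : H) :
    toCenterMap k J a (g * h) = toCenterMap k J a g * toCenterMap k J a h := by
  set s := toConv (J ∘ₗ HopfAlgebra.antipode k)
  set T := toConv (toCenterMap k J a)
  have hT_def : T = s * toConv a * toConv J := toConv_toCenterMap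
  set μ := (Bialgebra.mulCoalgHom k H).convComp (A := A)
  set p₁ := (fst k H H).convComp (A := A)
  set p₂ := (snd k H H).convComp (A := A)
  have hsj : p₁ s * p₁ (toConv J) = 1 := by rw [← map_mul, hJ.antipode_convMul_self, map_one]
  have hT : p₁ T = p₁ s * p₁ (toConv a) * p₁ (toConv J) := by rw [hT_def, map_mul, map_mul]
  have hcomm : Commute (p₁ T) (p₂ s) :=
    commute_convComp_fst_convComp_snd fun x y => toCenterMap_mul_comm hJ ha x _
  have key : μ T = p₁ T * p₂ T := by
    calc μ T = p₂ s * p₁ s * (p₁ (toConv a) * (p₁ (toConv J) * (p₂ (toConv a) * p₁ s))) *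
          (p₁ (toConv J) * p₂ (toConv J)) := by
          rw [hT_def, map_mul, map_mul, hJ.convComp_mulCoalgHom_antipode,
            ha.convComp_mulCoalgHom hJ, hJ.convComp_mulCoalgHom]
      _ = p₂ s * (p₁ s * p₁ (toConv a) * p₁ (toConv J)) * p₂ (toConv a) *
          (p₁ s * p₁ (toConv J)) * p₂ (toConv J) := by noncomm_ring
      _ = p₁ T * (p₂ s * p₂ (toConv a) * p₂ (toConv J)) := by
          rw [hsj, mul_one, ← hT, ← hcomm.eq]; noncomm_ring
      _ = p₁ T * p₂ T := by rw [hT_def, map_mul p₂, map_mul p₂]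
  exact congr($key (g ⊗ₜ h)).trans (convComp_fst_mul_convComp_snd_tmul T T g h)

lemma toCenterMap_one (hJ : IsMomentumMap k act J) (ha : MemGl k act a) :
    toCenterMap k J a 1 = 1 := by
  simp [toCenterMap, swMul, sw, Bialgebra.comul_one, Algebra.TensorProduct.one_def,
    hJ.map_one', ha.map_one']

end

theorem toCenterMap_central_algHom_general
    (k : Type*) [CommRing k]
    {H : Type*} [Ring H] [HopfAlgebra k H]
    {A : Type*} [Ring A] [Algebra k A]
    (act : H →ₗ[k] A →ₗ[k] A)
    (J : H →ₗ[k] A) (hJ : IsMomentumMap k act J)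
    (a : H →ₗ[k] A) (ha : MemGl k act a) :
    (∀ (g : H) (b : A), toCenterMap k J a g * b = b * toCenterMap k J a g)
      ∧ toCenterMap k J a 1 = 1
      ∧ ∀ g h : H, toCenterMap k J a (g * h) = toCenterMap k J a g * toCenterMap k J a h :=
  ⟨toCenterMap_mul_comm hJ ha, toCenterMap_one hJ ha, toCenterMap_mul hJ ha⟩

/-- Let `J` be a momentum map for an `H`-module algebra action on `A`.
For `𝖺 ∈ Gl(H,A)`, the map `𝖺_J(g) = J(S(g₍₁₎)) 𝖺(g₍₂₎) J(g₍₃₎)` takes values in the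
center of `A` and is a unital algebra homomorphism. -/
theorem toCenterMap_central_algHom
    (k : Type*) [CommRing k]
    {H : Type*} [Ring H] [HopfAlgebra k H]
    {A : Type*} [Ring A] [Algebra k A]
    (act : H →ₗ[k] A →ₗ[k] A) (hact : IsModuleAlgebraAction k act)
    (J : H →ₗ[k] A) (hJ : IsMomentumMap k act J)
    (a : H →ₗ[k] A) (ha : MemGl k act a) :
    (∀ (g : H) (b : A), toCenterMap k J a g * b = b * toCenterMap k J a g)
      ∧ toCenterMap k J a 1 = 1
      ∧ ∀ g h : H, toCenterMap k J a (g * h) = toCenterMap k J a g * toCenterMap k J a h :=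
  toCenterMap_central_algHom_general k act J hJ a ha

end EquivariantMorita
end
end

section
/- Let H be a Hopf algebra over a commutative ring k and A a unital associative k-algebra with a left H-module algebra action ▷. If J and J' are two momentum maps for the same action ▷, then the map 𝗓(g) := J(S(g₁)) J'(g₂) takes values in the center Z(A) and is a unital algebra homomorphism H → Z(A). Conversely, if J is a momentum map for ▷ and 𝗓 : H → Z(A) is a unital algebra homomorphism, then the convolution product J * 𝗓, i.e. g ↦ J(g₁)𝗓(g₂), is again a momentum map for ▷. -/
open scoped TensorProduct

noncomputable section

/-!
In the convolution ring `WithConv (H →ₗ[k] A)` a unital algebra map `f : H → A` is a unit with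
inverse `f ∘ S`, and multiplying values on the left or right by `b : A` is convolving with
`ε(·) • b`. So `J` is a momentum map exactly when `(· ▷ a)` is the conjugate of `ε(·) • a` by `J`.
Two such conjugations, by `J` and `J'`, agree iff `𝗓 = J⁻¹ * J'` commutes with every `ε(·) • b`,
i.e. iff `𝗓` takes central values; conversely, conjugating by `J * 𝗓` is conjugating by `J` when
`𝗓` is a central unit. Multiplicativity of `𝗓` comes from `𝗓(gh) = J(S h₁) 𝗓(g) J'(h₂)`, and
that of `J * 𝗓` from `J(g₁h₁) 𝗓(g₂h₂) = J(g₁) 𝗓(g₂) J(h₁) 𝗓(h₂)`, both using centrality.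
-/

open WithConv

namespace Units

variable {M : Type*} [Monoid M]

theorem commute_inv_mul_of_conj_eq {u v : Mˣ} {e : M}
    (h : ↑u * e * ↑u⁻¹ = ↑v * e * ↑v⁻¹) : Commute ↑(u⁻¹ * v) e := by
  calc ↑(u⁻¹ * v) * e = ↑u⁻¹ * (↑v * e * ↑v⁻¹) * ↑v := by simp [mul_assoc]
    _ = ↑u⁻¹ * (↑u * e * ↑u⁻¹) * ↑v := by rw [h]
    _ = e * ↑(u⁻¹ * v) := by simp [mul_assoc]

theorem conj_mul_of_commute (u : Mˣ) {z : Mˣ} {e : M} (h : Commute (z : M) e) :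
    ↑(u * z) * e * ↑(u * z)⁻¹ = ↑u * e * ↑u⁻¹ := by
  rw [mul_inv_rev, val_mul, val_mul, mul_assoc (u : M), h.eq, mul_assoc, mul_assoc,
    ← mul_assoc (z : M), mul_inv, one_mul, mul_assoc]

end Units

namespace LinearMap

open Coalgebra

variable {k H A : Type*} [CommSemiring k] [AddCommMonoid H] [Module k H] [Coalgebra k H]
  [Semiring A] [Algebra k A]

def counitSMul (b : A) : WithConv (H →ₗ[k] A) :=
  toConv (counit.smulRight b)

theorem counitSMul_convMul_apply (b : A) (f : WithConv (H →ₗ[k] A)) (h : H) :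
    (counitSMul b * f : WithConv (H →ₗ[k] A)) h = b * f h := by
  rw [(ℛ k h).convMul_apply]
  simp only [counitSMul, ofConv_toConv, smulRight_apply, smul_mul_assoc, ← mul_smul_comm,
    ← Finset.mul_sum, ← map_smul, ← map_sum, sum_counit_smul]

theorem convMul_counitSMul_apply (b : A) (f : WithConv (H →ₗ[k] A)) (h : H) :
    (f * counitSMul b : WithConv (H →ₗ[k] A)) h = f h * b := by
  have hsum :
      ∑ i ∈ (ℛ k h).index, counit (R := k) ((ℛ k h).right i) • (ℛ k h).left i = h := by
    simpa only [map_sum, TensorProduct.rid_tmul, one_smul]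
      using congr(TensorProduct.rid k H $(sum_tmul_counit_eq (ℛ k h)))
  rw [(ℛ k h).convMul_apply]
  simp only [counitSMul, ofConv_toConv, smulRight_apply, mul_smul_comm, ← smul_mul_assoc,
    ← Finset.sum_mul, ← map_smul, ← map_sum, hsum]

theorem commute_counitSMul_iff {f : WithConv (H →ₗ[k] A)} {b : A} :
    Commute f (counitSMul b) ↔ ∀ h, Commute (f h) b := by
  refine (commute_iff_eq _ _).trans <| WithConv.ext_iff.trans <| LinearMap.ext_iff.trans <|
    forall_congr' fun h => ?_
  change (f * counitSMul b : WithConv (H →ₗ[k] A)) h =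
    (counitSMul b * f : WithConv (H →ₗ[k] A)) h ↔ _
  rw [convMul_counitSMul_apply, counitSMul_convMul_apply, Commute, SemiconjBy]

end LinearMap

section Bialgebra

variable {k H A : Type*} [CommSemiring k] [Semiring H] [Bialgebra k H] [Semiring A] [Algebra k A]

theorem LinearMap.convMul_apply_one (f g : WithConv (H →ₗ[k] A)) : (f * g) 1 = f 1 * g 1 := by
  simp [Bialgebra.comul_one, Algebra.TensorProduct.one_def]

end Bialgebra

namespace AlgHom

open Coalgebra LinearMap

variable {k H A : Type*} [CommSemiring k] [Semiring H] [Semiring A] [Algebra k A]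

section Bialgebra

variable [Bialgebra k H]

theorem convMul_apply_mul_of_commute (f f' : H →ₐ[k] A) (hc : ∀ x y, Commute (f' x) (f y))
    (g h : H) :
    (toConv f.toLinearMap * toConv f'.toLinearMap : WithConv (H →ₗ[k] A)) (g * h) =
      (toConv f.toLinearMap * toConv f'.toLinearMap : WithConv (H →ₗ[k] A)) g *
        (toConv f.toLinearMap * toConv f'.toLinearMap : WithConv (H →ₗ[k] A)) h := by
  rw [((ℛ k g).mul (ℛ k h)).convMul_apply, (ℛ k g).convMul_apply, (ℛ k h).convMul_apply,
    Finset.sum_mul_sum, Coalgebra.Repr.mul_index, Finset.sum_product]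
  refine Finset.sum_congr rfl fun i _ => Finset.sum_congr rfl fun j _ => ?_
  simp only [Coalgebra.Repr.mul_left, Coalgebra.Repr.mul_right, toLinearMap_apply,
    map_mul, mul_assoc, (hc _ _).left_comm]

def convMul (f f' : H →ₐ[k] A) (hc : ∀ x y, Commute (f' x) (f y)) : H →ₐ[k] A :=
  .ofLinearMap (toConv f.toLinearMap * toConv f'.toLinearMap).ofConv
    ((convMul_apply_one _ _).trans (by simp))
    (convMul_apply_mul_of_commute f f' hc)

end Bialgebra

variable [HopfAlgebra k H]

def toConvUnit (f : H →ₐ[k] A) : (WithConv (H →ₗ[k] A))ˣ where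
  val := toConv f.toLinearMap
  inv := toConv (f.toLinearMap ∘ₗ HopfAlgebra.antipode k)
  val_inv := by
    ext h
    rw [(ℛ k h).convMul_apply]
    simp [← map_mul, ← map_sum, HopfAlgebra.sum_mul_antipode_eq_algebraMap_counit]
  inv_val := by
    ext h
    rw [(ℛ k h).convMul_apply]
    simp [← map_mul, ← map_sum, HopfAlgebra.sum_antipode_mul_eq_algebraMap_counit]

theorem convMul_toConvUnit (f f' : H →ₐ[k] A) (hc : ∀ x y, Commute (f' x) (f y)) :
    (convMul f f' hc).toConvUnit = f.toConvUnit * f'.toConvUnit :=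
  Units.ext rfl

theorem antipode_convMul_apply_mul (f f' : H →ₐ[k] A) (g h : H) :
    (toConv (f.toLinearMap ∘ₗ HopfAlgebra.antipode k) * toConv f'.toLinearMap :
        WithConv (H →ₗ[k] A)) (g * h) =
      (toConv (f.toLinearMap ∘ₗ HopfAlgebra.antipode k) *
        counitSMul ((toConv (f.toLinearMap ∘ₗ HopfAlgebra.antipode k) * toConv f'.toLinearMap :
          WithConv (H →ₗ[k] A)) g) * toConv f'.toLinearMap : WithConv (H →ₗ[k] A)) h := by
  rw [((ℛ k g).mul (ℛ k h)).convMul_apply, (ℛ k h).convMul_apply, (ℛ k g).convMul_apply,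
    Coalgebra.Repr.mul_index, Finset.sum_product, Finset.sum_comm]
  refine Finset.sum_congr rfl fun j _ => ?_
  simp only [convMul_counitSMul_apply, Coalgebra.Repr.mul_left, Coalgebra.Repr.mul_right,
    LinearMap.comp_apply, toLinearMap_apply,
    HopfAlgebra.antipode_mul_antidistrib, map_mul, Finset.mul_sum, Finset.sum_mul, mul_assoc]

theorem antipode_convMul_apply_mul_of_commute (f f' : H →ₐ[k] A)
    (hc : ∀ x y, Commute ((toConv (f.toLinearMap ∘ₗ HopfAlgebra.antipode k) *
      toConv f'.toLinearMap : WithConv (H →ₗ[k] A)) x) (f (HopfAlgebra.antipode k y)))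
    (g h : H) :
    (toConv (f.toLinearMap ∘ₗ HopfAlgebra.antipode k) * toConv f'.toLinearMap :
        WithConv (H →ₗ[k] A)) (g * h) =
      (toConv (f.toLinearMap ∘ₗ HopfAlgebra.antipode k) * toConv f'.toLinearMap :
        WithConv (H →ₗ[k] A)) g *
      (toConv (f.toLinearMap ∘ₗ HopfAlgebra.antipode k) * toConv f'.toLinearMap :
        WithConv (H →ₗ[k] A)) h := by
  have hcomm : Commute (toConv (f.toLinearMap ∘ₗ HopfAlgebra.antipode k))
      (counitSMul ((toConv (f.toLinearMap ∘ₗ HopfAlgebra.antipode k) * toConv f'.toLinearMap :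
        WithConv (H →ₗ[k] A)) g)) :=
    commute_counitSMul_iff.mpr fun y => (hc g y).symm
  rw [antipode_convMul_apply_mul, hcomm.eq, mul_assoc, counitSMul_convMul_apply]

end AlgHom

namespace EquivariantMorita

open LinearMap

section MomentumMap

variable {k H A : Type*} [CommRing k] [Ring H] [HopfAlgebra k H] [Ring A] [Algebra k A]

theorem swMul_eq_convMul (f g : H →ₗ[k] A) : swMul k f g = (toConv f * toConv g).ofConv := rfl

theorem swMul_mul_comp_eq_conj (J i : H →ₗ[k] A) (a : A) :
    swMul k J (LinearMap.mul k A a ∘ₗ i) = (toConv J * counitSMul a * toConv i).ofConv := by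
  have hmul : toConv (LinearMap.mul k A a ∘ₗ i) = counitSMul a * toConv i := by
    ext h
    exact (counitSMul_convMul_apply a (toConv i) h).symm
  rw [swMul_eq_convMul, hmul, mul_assoc]

variable {act : H →ₗ[k] A →ₗ[k] A}

def IsMomentumMap.toAlgHom_s7 {J : H →ₗ[k] A} (hJ : IsMomentumMap k act J) : H →ₐ[k] A :=
  .ofLinearMap J hJ.map_one' hJ.map_mul'

theorem IsMomentumMap.toConv_flip_eq_conj {J : H →ₗ[k] A} (hJ : IsMomentumMap k act J) (a : A) :
    toConv (act.flip a) =
      (hJ.toAlgHom_s7.toConvUnit : WithConv (H →ₗ[k] A)) * counitSMul a *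
        (↑hJ.toAlgHom_s7.toConvUnit⁻¹ : WithConv (H →ₗ[k] A)) := by
  ext h
  exact (hJ.inner' h a).trans congr($(swMul_mul_comp_eq_conj J _ a) h)

theorem isMomentumMap_of_toConv_flip_eq_conj (f : H →ₐ[k] A)
    (hf : ∀ a, toConv (act.flip a) =
      (f.toConvUnit : WithConv (H →ₗ[k] A)) * counitSMul a *
        (↑f.toConvUnit⁻¹ : WithConv (H →ₗ[k] A))) :
    IsMomentumMap k act f.toLinearMap where
  map_one' := f.map_one
  map_mul' := f.map_mul
  inner' h a := (congr($(hf a) h)).trans congr($(swMul_mul_comp_eq_conj f.toLinearMap _ a) h).symm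

end MomentumMap

theorem momentumMap_difference_central_and_twist_general
    (k : Type*) [CommRing k]
    {H : Type*} [Ring H] [HopfAlgebra k H]
    {A : Type*} [Ring A] [Algebra k A]
    (act : H →ₗ[k] A →ₗ[k] A)
    (J J' : H →ₗ[k] A) (hJ : IsMomentumMap k act J) (hJ' : IsMomentumMap k act J') :
    ((∀ (g : H) (b : A),
        swMul k (J ∘ₗ HopfAlgebra.antipode (R := k)) J' g * b
          = b * swMul k (J ∘ₗ HopfAlgebra.antipode (R := k)) J' g)
      ∧ swMul k (J ∘ₗ HopfAlgebra.antipode (R := k)) J' 1 = 1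
      ∧ (∀ g h : H,
          swMul k (J ∘ₗ HopfAlgebra.antipode (R := k)) J' (g * h)
            = swMul k (J ∘ₗ HopfAlgebra.antipode (R := k)) J' g
              * swMul k (J ∘ₗ HopfAlgebra.antipode (R := k)) J' h))
      ∧ (∀ z : H →ₗ[k] A,
          (∀ (g : H) (b : A), z g * b = b * z g) → z 1 = 1 →
          (∀ g h : H, z (g * h) = z g * z h) →
          IsMomentumMap k act (swMul k J z)) := by
  have hcentral (g : H) (b : A) :
      Commute (swMul k (J ∘ₗ HopfAlgebra.antipode (R := k)) J' g) b :=
    commute_counitSMul_iff.mp (Units.commute_inv_mul_of_conj_eq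
      ((hJ.toConv_flip_eq_conj b).symm.trans (hJ'.toConv_flip_eq_conj b))) g
  refine ⟨⟨hcentral, ?_, fun g h => ?_⟩, fun z hz hz1 hzm => ?_⟩
  · rw [swMul_eq_convMul, convMul_apply_one]
    simp [hJ.map_one', hJ'.map_one']
  · exact hJ.toAlgHom_s7.antipode_convMul_apply_mul_of_commute hJ'.toAlgHom_s7
      (fun x _ => hcentral x _) g h
  · let zHom : H →ₐ[k] A := .ofLinearMap z hz1 hzm
    have hzJ (x y : H) : Commute (zHom x) (hJ.toAlgHom_s7 y) := hz x (J y)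
    refine isMomentumMap_of_toConv_flip_eq_conj (hJ.toAlgHom_s7.convMul zHom hzJ) fun a => ?_
    rw [AlgHom.convMul_toConvUnit, Units.conj_mul_of_commute _
      (commute_counitSMul_iff (f := (zHom.toConvUnit : WithConv (H →ₗ[k] A))).mpr
        fun x => hz x a),
      hJ.toConv_flip_eq_conj]

/-- If `J` and `J'` are momentum maps for the same `H`-module algebra
action on `A`, then `𝗓(g) = J(S(g₍₁₎)) J'(g₍₂₎)`, i.e. `𝗓 = (J ∘ S) * J'`, takes values
in the center of `A` and is a unital algebra homomorphism. Conversely, for a momentum map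
`J` and a unital algebra homomorphism `𝗓 : H → Z(A)`, the convolution `J * 𝗓` is again a
momentum map. -/
theorem momentumMap_difference_central_and_twist
    (k : Type*) [CommRing k]
    {H : Type*} [Ring H] [HopfAlgebra k H]
    {A : Type*} [Ring A] [Algebra k A]
    (act : H →ₗ[k] A →ₗ[k] A) (hact : IsModuleAlgebraAction k act)
    (J J' : H →ₗ[k] A) (hJ : IsMomentumMap k act J) (hJ' : IsMomentumMap k act J') :
    ((∀ (g : H) (b : A),
        swMul k (J ∘ₗ HopfAlgebra.antipode (R := k)) J' g * b
          = b * swMul k (J ∘ₗ HopfAlgebra.antipode (R := k)) J' g)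
      ∧ swMul k (J ∘ₗ HopfAlgebra.antipode (R := k)) J' 1 = 1
      ∧ (∀ g h : H,
          swMul k (J ∘ₗ HopfAlgebra.antipode (R := k)) J' (g * h)
            = swMul k (J ∘ₗ HopfAlgebra.antipode (R := k)) J' g
              * swMul k (J ∘ₗ HopfAlgebra.antipode (R := k)) J' h))
      ∧ (∀ z : H →ₗ[k] A,
          (∀ (g : H) (b : A), z g * b = b * z g) → z 1 = 1 →
          (∀ g h : H, z (g * h) = z g * z h) →
          IsMomentumMap k act (swMul k J z)) :=
  momentumMap_difference_central_and_twist_general k act J J' hJ hJ'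

end EquivariantMorita
end
end

section
/- Let H be a Hopf *-algebra over a commutative *-ring k and A a unital *-algebra over k with a *-action ▷ of H. Then for any two momentum maps J and J' for ▷ which are in addition *-homomorphisms (J(g*) = J(g)* and J'(g*) = J'(g)* for all g), the unique unital algebra homomorphism 𝗓 : H → Z(A) with J' = J * 𝗓 is itself a *-homomorphism, i.e. 𝗓(g*) = 𝗓(g)* for all g ∈ H. -/
open scoped TensorProduct

noncomputable section

/-!
`J ∘ S` is the convolution inverse of the algebra map `J`, so `𝗓 = (J ∘ S) * J'`. Because
`star` is a coalgebra map and reverses products, `f ↦ op ∘ star ∘ f ∘ star` is a ring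
homomorphism from the convolution ring of `A`-valued maps to that of `Aᵐᵒᵖ`-valued maps; it sends
the `*`-homomorphisms `J`, `J'` to `op ∘ J`, `op ∘ J'`. Since `𝗓` is central, `J' = J * 𝗓` also
holds after composing with `op`, and applying the homomorphism to `𝗓 = (J ∘ S) * J'` gives
`op ∘ star ∘ 𝗓 ∘ star = op ∘ 𝗓`.
-/

namespace EquivariantMorita

open Coalgebra WithConv

lemma comul_star_eq_star_comul {k C : Type*} [CommRing k] [StarRing k]
    [AddCommGroup C] [Module k C] [StarAddMonoid C] [StarModule k C] [CoalgebraStruct k C]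
    (hcomul_star : ∀ (g : C) (n : ℕ) (u v : Fin n → C),
      comul (R := k) g = ∑ i, u i ⊗ₜ[k] v i →
      comul (R := k) (star g) = ∑ i, star (u i) ⊗ₜ[k] star (v i))
    (c : C) : comul (R := k) (star c) = star (comul (R := k) c) := by
  obtain ⟨n, u, v, hc⟩ := TensorProduct.exists_sum_tmul_eq (comul (R := k) c)
  rw [hcomul_star c n u v hc, hc, star_sum]
  rfl

section OpConv

variable {k C A : Type*} [CommRing k] [AddCommGroup C] [Module k C] [Ring A] [Algebra k A]

def opConv (f : WithConv (C →ₗ[k] A)) : WithConv (C →ₗ[k] Aᵐᵒᵖ) :=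
  toConv ((MulOpposite.opLinearEquiv k).toLinearMap ∘ₗ f.ofConv)

@[simp] lemma opConv_apply (f : WithConv (C →ₗ[k] A)) (c : C) :
    opConv f c = MulOpposite.op (f c) := rfl

lemma opConv_injective : Function.Injective (opConv (k := k) (C := C) (A := A)) :=
  fun _ _ h => by ext c; simpa using congr($h c)

lemma opConv_mul_of_commute [Coalgebra k C] (f g : WithConv (C →ₗ[k] A))
    (hfg : ∀ c c' : C, Commute (f c) (g c')) : opConv (f * g) = opConv f * opConv g := by
  ext c
  rw [opConv_apply, (ℛ k c).convMul_apply, (ℛ k c).convMul_apply, ← MulOpposite.opAddEquiv_apply,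
    map_sum]
  exact Finset.sum_congr rfl fun i _ => by simp [(hfg _ _).eq]

end OpConv

section StarCoalgebra

variable {k C A : Type*} [CommRing k] [StarRing k]
  [AddCommGroup C] [Module k C] [StarAddMonoid C] [StarModule k C] [Coalgebra k C]
  [Ring A] [Algebra k A] [StarRing A] [StarModule k A]
  (hcomul : ∀ c : C, comul (R := k) (star c) = star (comul (R := k) c))
  (hcounit : ∀ c : C, counit (R := k) (star c) = star (counit (R := k) c))

def reprStar {c : C} {ι : Type*} (ρ : Repr k c ι) : Repr k (star c) ι where
  index := ρ.index
  left i := star (ρ.left i)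
  right i := star (ρ.right i)
  eq := by rw [hcomul, ← ρ.eq, star_sum]; rfl

def opStarRingHom : WithConv (C →ₗ[k] A) →+* WithConv (C →ₗ[k] Aᵐᵒᵖ) where
  toFun f := opConv (star f)
  map_zero' := by ext; simp
  map_add' f g := by ext; simp
  map_one' := by ext; simp [hcounit, algebraMap_star_comm]
  map_mul' f g := by
    ext c
    rw [(ℛ k c).convMul_apply, opConv_apply, LinearMap.intrinsicStar_apply,
      (reprStar hcomul (ℛ k c)).convMul_apply, star_sum, ← MulOpposite.opAddEquiv_apply, map_sum]
    exact Finset.sum_congr rfl fun i _ => by simp [reprStar]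

lemma opStarRingHom_eq_opConv_iff (f : WithConv (C →ₗ[k] A)) :
    opStarRingHom hcomul hcounit f = opConv f ↔ ∀ c, f (star c) = star (f c) :=
  opConv_injective.eq_iff.trans (LinearMap.IntrinsicStar.isSelfAdjoint_iff_map_star f)

end StarCoalgebra

lemma algHom_comp_antipode_mul_self {k H A : Type*} [CommRing k] [Ring H] [HopfAlgebra k H]
    [Ring A] [Algebra k A] (φ : H →ₐ[k] A) :
    toConv (φ.toLinearMap ∘ₗ HopfAlgebra.antipode k) * toConv φ.toLinearMap = 1 := by
  have h := LinearMap.algHom_comp_convMul_distrib φ (toConv (HopfAlgebra.antipode k))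
    (toConv LinearMap.id)
  rw [LinearMap.antipode_mul_id, ofConv_toConv, ofConv_toConv, LinearMap.comp_id] at h
  apply WithConv.ofConv_injective
  rw [← h]
  ext c
  simp

theorem central_twist_is_star_hom_general
    (k : Type*) [CommRing k] [StarRing k]
    {H : Type*} [Ring H] [HopfAlgebra k H] [StarRing H] [StarModule k H]
    {A : Type*} [Ring A] [Algebra k A] [StarRing A] [StarModule k A]
    (hcounit_star : ∀ g : H,
      Coalgebra.counit (R := k) (star g) = star (Coalgebra.counit (R := k) g))
    (hcomul_star : ∀ (g : H) (n : ℕ) (u v : Fin n → H),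
      Coalgebra.comul (R := k) g = ∑ i, u i ⊗ₜ[k] v i →
      Coalgebra.comul (R := k) (star g) = ∑ i, star (u i) ⊗ₜ[k] star (v i))
    (act : H →ₗ[k] A →ₗ[k] A)
    (J J' : H →ₗ[k] A) (hJ : IsMomentumMap k act J)
    (hJstar : ∀ g : H, J (star g) = star (J g))
    (hJ'star : ∀ g : H, J' (star g) = star (J' g)) :
    ∀ z : H →ₗ[k] A,
      (∀ (g : H) (b : A), z g * b = b * z g) → z 1 = 1 →
      (∀ g h : H, z (g * h) = z g * z h) →
      (∀ g : H, J' g = swMul k J z g) →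
      ∀ g : H, z (star g) = star (z g) := by
  intro z hz_central _ _ hJ'_eq
  have hcomul := comul_star_eq_star_comul hcomul_star
  let Φ := opStarRingHom (A := A) hcomul hcounit_star
  have hΦ_iff := opStarRingHom_eq_opConv_iff (A := A) hcomul hcounit_star
  set S := toConv (J ∘ₗ HopfAlgebra.antipode k)
  have hSJ : S * toConv J = 1 :=
    algHom_comp_antipode_mul_self (AlgHom.ofLinearMap J hJ.map_one' hJ.map_mul')
  have hJ' : toConv J' = toConv J * toConv z := WithConv.ext (LinearMap.ext hJ'_eq)
  have hop : opConv (toConv J * toConv z) = opConv (toConv J) * opConv (toConv z) :=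
    opConv_mul_of_commute _ _ fun c c' => (hz_central c' (J c)).symm
  have hΦJ : Φ (toConv J) = opConv (toConv J) := (hΦ_iff _).2 hJstar
  have hΦJ' : Φ (toConv J') = opConv (toConv J') := (hΦ_iff _).2 hJ'star
  refine (hΦ_iff (toConv z)).1 ?_
  calc Φ (toConv z) = Φ (S * toConv J') := by rw [hJ', ← mul_assoc, hSJ, one_mul]
    _ = Φ S * opConv (toConv J) * opConv (toConv z) := by
      rw [map_mul, hΦJ', hJ', hop, mul_assoc]
    _ = opConv (toConv z) := by rw [← hΦJ, ← map_mul, hSJ, map_one, one_mul]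

/-- In the `*`-setting, for two momentum maps `J, J'` of the same
`*`-action which are `*`-homomorphisms, the unique unital algebra homomorphism
`𝗓 : H → Z(A)` with `J' = J * 𝗓` is itself a `*`-homomorphism. -/
theorem central_twist_is_star_hom
    (k : Type*) [CommRing k] [StarRing k]
    {H : Type*} [Ring H] [HopfAlgebra k H] [StarRing H] [StarModule k H]
    {A : Type*} [Ring A] [Algebra k A] [StarRing A] [StarModule k A]
    (hcounit_star : ∀ g : H,
      Coalgebra.counit (R := k) (star g) = star (Coalgebra.counit (R := k) g))
    (hcomul_star : ∀ (g : H) (n : ℕ) (u v : Fin n → H),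
      Coalgebra.comul (R := k) g = ∑ i, u i ⊗ₜ[k] v i →
      Coalgebra.comul (R := k) (star g) = ∑ i, star (u i) ⊗ₜ[k] star (v i))
    (act : H →ₗ[k] A →ₗ[k] A) (hact : IsModuleAlgebraAction k act)
    (hstar_act : ∀ (h : H) (a : A),
      star (act h a) = act (star (HopfAlgebra.antipode (R := k) h)) (star a))
    (J J' : H →ₗ[k] A) (hJ : IsMomentumMap k act J) (hJ' : IsMomentumMap k act J')
    (hJstar : ∀ g : H, J (star g) = star (J g))
    (hJ'star : ∀ g : H, J' (star g) = star (J' g)) :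
    ∀ z : H →ₗ[k] A,
      (∀ (g : H) (b : A), z g * b = b * z g) → z 1 = 1 →
      (∀ g h : H, z (g * h) = z g * z h) →
      (∀ g : H, J' g = swMul k J z g) →
      ∀ g : H, z (star g) = star (z g) :=
  central_twist_is_star_hom_general k hcounit_star hcomul_star act J J' hJ hJstar hJ'star

end EquivariantMorita
end
end

section
/- Let H be a Hopf *-algebra over a commutative *-ring k, let A and B be unital *-algebras over k with *-actions ▷_A and ▷_B of H admitting momentum maps J^A and J^B which are *-homomorphisms, and let E be a (B,A)-bimodule carrying an A-valued inner product ⟨·,·⟩. Then the lifted H-action h ▷ x := J^B(h₁) · x · J^A(S(h₂)) on E is compatible with the inner product: h ▷_A ⟨x,y⟩ = ⟨S(h₁)* ▷ x, h₂ ▷ y⟩ for all h ∈ H and x,y ∈ E. -/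
open scoped TensorProduct

noncomputable section

namespace EquivariantMorita

section BimodulePart

variable (k : Type*) [CommRing k]
variable {H : Type*} [Ring H] [HopfAlgebra k H]
variable {A : Type*} [Ring A] [Algebra k A]
variable {B : Type*} [Ring B] [Algebra k B]
variable {E : Type*} [AddCommGroup E] [Module k E]

/-- `E` is a unital `(B,A)`-bimodule via the `k`-bilinear left multiplication `lB`
(`lB b x = b · x`) and right multiplication `rA` (`rA a x = x · a`). -/
structure IsBimodule (lB : B →ₗ[k] E →ₗ[k] E) (rA : A →ₗ[k] E →ₗ[k] E) : Prop where
  one_lsmul : ∀ x : E, lB 1 x = x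
  mul_lsmul : ∀ (b b' : B) (x : E), lB (b * b') x = lB b (lB b' x)
  one_rsmul : ∀ x : E, rA 1 x = x
  mul_rsmul : ∀ (a a' : A) (x : E), rA (a * a') x = rA a' (rA a x)
  lsmul_rsmul : ∀ (b : B) (a : A) (x : E), rA a (lB b x) = lB b (rA a x)

/-- `actE` makes the `(B,A)`-bimodule `E` (with multiplications `lB`, `rA`) an
`H`-equivariant bimodule: `(gh) ▷ x = g ▷ (h ▷ x)`, `1 ▷ x = x`,
`h ▷ (b·x) = (h₍₁₎ ▷ b)·(h₍₂₎ ▷ x)` and `h ▷ (x·a) = (h₍₁₎ ▷ x)·(h₍₂₎ ▷ a)`. -/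
structure IsEquivariantBimodule (actB : H →ₗ[k] B →ₗ[k] B) (actA : H →ₗ[k] A →ₗ[k] A)
    (lB : B →ₗ[k] E →ₗ[k] E) (rA : A →ₗ[k] E →ₗ[k] E)
    (actE : H →ₗ[k] E →ₗ[k] E) : Prop where
  mul_act : ∀ (g h : H) (x : E), actE (g * h) x = actE g (actE h x)
  one_act : ∀ x : E, actE 1 x = x
  act_lsmul : ∀ (h : H) (b : B) (x : E),
    actE h (lB b x) = sw k lB (actB.flip b) (actE.flip x) h
  act_rsmul : ∀ (h : H) (a : A) (x : E),
    actE h (rA a x) = sw k rA.flip (actE.flip x) (actA.flip a) h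

/-- The canonical lift `h ▷ x = J^B(h₍₁₎) · (x · J^A(S(h₍₂₎)))` of the `H`-action to a
`(B,A)`-bimodule along momentum maps, as a linear map in `h` for fixed `x`. -/
def momLift (JB : H →ₗ[k] B) (JA : H →ₗ[k] A)
    (lB : B →ₗ[k] E →ₗ[k] E) (rA : A →ₗ[k] E →ₗ[k] E) (x : E) : H →ₗ[k] E :=
  sw k lB JB (rA.flip x ∘ₗ (JA ∘ₗ HopfAlgebra.antipode (R := k)))

end BimodulePart

end EquivariantMorita

/-!
Expanding the lifted action, `Δ(S(a)*) = S(a₂)* ⊗ S(a₁)*` and `S(S(a)*) = a*` let the action in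
the left slot pass through the inner product: `⟨S(a)* ▷ x, w⟩ = J^A(a₁) ⟨x, J^B(S a₂) · w⟩`.
Hence, by coassociativity, the right-hand side is `J^A(h₁) ⟨x, J^B(S h₂) · (h₃ ▷ y)⟩`, and
`J^B(S h₁) · (h₂ ▷ y) = y · J^A(S h)` because `J^B ∘ S` is the convolution inverse of the algebra
map `J^B`. What remains is `J^A(h₁) ⟨x, y⟩ J^A(S h₂) = h ▷ ⟨x, y⟩`. Both Hopf-algebra identities
used follow from the uniqueness of convolution inverses.
-/

namespace EquivariantMorita

open Coalgebra TensorProduct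

section SweedlerCalculus

variable {k : Type*} [CommRing k] {C : Type*} [AddCommGroup C] [Module k C] [Coalgebra k C]
variable {M N O P Q R : Type*} [AddCommGroup M] [Module k M] [AddCommGroup N] [Module k N]
  [AddCommGroup O] [Module k O] [AddCommGroup P] [Module k P] [AddCommGroup Q] [Module k Q]
  [AddCommGroup R] [Module k R]

theorem sw_apply_of_comul_eq {ι : Type*} {a : C} {s : Finset ι} {u v : ι → C}
    (h : comul (R := k) a = ∑ i ∈ s, u i ⊗ₜ[k] v i)
    (μ : M →ₗ[k] N →ₗ[k] P) (f : C →ₗ[k] M) (g : C →ₗ[k] N) :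
    sw k μ f g a = ∑ i ∈ s, μ (f (u i)) (g (v i)) := by
  simp [sw, h]

theorem sw_congr {μ : M →ₗ[k] N →ₗ[k] P} {μ' : O →ₗ[k] Q →ₗ[k] P}
    {f : C →ₗ[k] M} {g : C →ₗ[k] N} {f' : C →ₗ[k] O} {g' : C →ₗ[k] Q}
    (h : ∀ a b, μ (f a) (g b) = μ' (f' a) (g' b)) : sw k μ f g = sw k μ' f' g' := by
  have : lift μ ∘ₗ map f g = lift μ' ∘ₗ map f' g' :=
    TensorProduct.ext' fun a b => by simp [h]
  simp only [sw, ← LinearMap.comp_assoc, this]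

theorem sw_compr₂ (μ : M →ₗ[k] N →ₗ[k] P) (φ : P →ₗ[k] Q) (f : C →ₗ[k] M)
    (g : C →ₗ[k] N) :
    sw k (μ.compr₂ φ) f g = φ ∘ₗ sw k μ f g := by
  simp only [sw, TensorProduct.lift_compr₂, LinearMap.comp_assoc]

theorem sw_counit_left (μ : M →ₗ[k] N →ₗ[k] P) (φ : k →ₗ[k] M) (g : C →ₗ[k] N) :
    sw k μ (φ ∘ₗ counit) g = μ (φ 1) ∘ₗ g := by
  ext a
  rw [sw_apply_of_comul_eq (ℛ k a).eq.symm]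
  conv_rhs => rw [← sum_counit_smul (ℛ k a)]
  simp only [LinearMap.comp_apply, map_sum, map_smul]
  refine Finset.sum_congr rfl fun i _ => ?_
  rw [← mul_one (counit _), ← smul_eq_mul, map_smul, map_smul, LinearMap.smul_apply,
    smul_eq_mul, mul_one]

theorem sw_assoc (μ₁ : R →ₗ[k] O →ₗ[k] P) (ν₁ : M →ₗ[k] N →ₗ[k] R)
    (μ₂ : M →ₗ[k] Q →ₗ[k] P) (ν₂ : N →ₗ[k] O →ₗ[k] Q)
    (f : C →ₗ[k] M) (g : C →ₗ[k] N) (e : C →ₗ[k] O)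
    (h : ∀ a b c, μ₁ (ν₁ (f a) (g b)) (e c) = μ₂ (f a) (ν₂ (g b) (e c))) :
    sw k μ₁ (sw k ν₁ f g) e = sw k μ₂ f (sw k ν₂ g e) := by
  have key : lift μ₁ ∘ₗ map (lift ν₁ ∘ₗ map f g) e =
      (lift μ₂ ∘ₗ map f (lift ν₂ ∘ₗ map g e)) ∘ₗ
        (TensorProduct.assoc k C C C).toLinearMap :=
    TensorProduct.ext_threefold fun a b c => by simp [h]
  ext a
  calc sw k μ₁ (sw k ν₁ f g) e a
      = (lift μ₁ ∘ₗ map (lift ν₁ ∘ₗ map f g) e) (comul.rTensor C (comul a)) := by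
        simp only [sw, LinearMap.comp_apply, LinearMap.map_rTensor, LinearMap.comp_assoc]
    _ = (lift μ₂ ∘ₗ map f (lift ν₂ ∘ₗ map g e)) (comul.lTensor C (comul a)) := by
        rw [key, LinearMap.comp_apply, LinearEquiv.coe_coe, coassoc_apply]
    _ = sw k μ₂ f (sw k ν₂ g e) a := by
        simp only [sw, LinearMap.comp_apply, LinearMap.map_lTensor, LinearMap.comp_assoc]

theorem comul_star_eq_sum [Star C]
    (hcomul_star : ∀ (g : C) (n : ℕ) (u v : Fin n → C),
      comul (R := k) g = ∑ i, u i ⊗ₜ[k] v i →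
      comul (R := k) (star g) = ∑ i, star (u i) ⊗ₜ[k] star (v i))
    {ι : Type*} {a : C} {s : Finset ι} {u v : ι → C}
    (h : comul (R := k) a = ∑ i ∈ s, u i ⊗ₜ[k] v i) :
    comul (R := k) (star a) = ∑ i ∈ s, star (u i) ⊗ₜ[k] star (v i) := by
  have reindex (w : ι → C ⊗[k] C) : ∑ i ∈ s, w i = ∑ j, w (s.equivFin.symm j) := by
    rw [← Finset.sum_coe_sort s]
    exact (s.equivFin.symm.sum_comp _).symm
  rw [reindex] at h ⊢
  exact hcomul_star a _ _ _ h

end SweedlerCalculus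

open HopfAlgebra WithConv

section Antipode

variable {k : Type*} [CommRing k] {H : Type*} [Ring H] [HopfAlgebra k H]

theorem swMul_eq_ofConv_mul {A : Type*} [Ring A] [Algebra k A] (f g : H →ₗ[k] A) :
    swMul k f g = (toConv f * toConv g).ofConv := rfl

theorem swMul_antipode_id :
    swMul k (antipode k) LinearMap.id = Algebra.linearMap k H ∘ₗ counit (A := H) :=
  congrArg ofConv LinearMap.antipode_mul_id

theorem swMul_algHom_comp_antipode {A : Type*} [Ring A] [Algebra k A] (J : H →ₐ[k] A) :
    swMul k (J.toLinearMap ∘ₗ antipode k) J.toLinearMap =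
      Algebra.linearMap k A ∘ₗ counit := by
  have := LinearMap.algHom_comp_convMul_distrib J (toConv (antipode k)) (toConv LinearMap.id)
  simp only [LinearMap.antipode_mul_id, LinearMap.comp_id] at this
  rw [swMul_eq_ofConv_mul, ← this]
  ext a; simp

/-- Both sides are convolution inverses of `comul`. The right inverse is Mathlib's
`LinearMap.comul_right_inv`; for the left one, `(S a₂ ⊗ S a₁)(a₃ ⊗ a₄)` is regrouped as
`(1 ⊗ S a₁)((S a₂ ⊗ 1)(a₃ ⊗ a₄))`, whose inner factor collapses to `1 ⊗ a₂` (`hinner`). -/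
theorem comul_comp_antipode :
    comul ∘ₗ antipode k = sw k (TensorProduct.mk k H H).flip (antipode k) (antipode k) := by
  let mulL : H →ₗ[k] H ⊗[k] H →ₗ[k] H ⊗[k] H :=
    LinearMap.mul k (H ⊗[k] H) ∘ₗ TensorProduct.mk k H H 1
  let mulR : H →ₗ[k] H ⊗[k] H →ₗ[k] H ⊗[k] H :=
    LinearMap.mul k (H ⊗[k] H) ∘ₗ (TensorProduct.mk k H H).flip 1
  have hcomul : sw k (TensorProduct.mk k H H) LinearMap.id LinearMap.id = comul (R := k) := by
    simp [sw, TensorProduct.lift_mk]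
  have hinner : sw k mulR (antipode k) comul = TensorProduct.mk k H H 1 := by
    rw [← hcomul, ← sw_assoc (TensorProduct.mk k H H) (LinearMap.mul k H) mulR _ _ _ _
        fun _ _ _ => by simp [mulR, Algebra.TensorProduct.tmul_mul_tmul],
      ← swMul, swMul_antipode_id, sw_counit_left, Algebra.linearMap_apply, map_one,
      LinearMap.comp_id]
  have hleft : swMul k (sw k (TensorProduct.mk k H H).flip (antipode k) (antipode k)) comul =
      Algebra.linearMap k (H ⊗[k] H) ∘ₗ counit := by
    rw [swMul, sw_assoc _ _ mulL mulR _ _ _ fun _ _ _ => by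
        simp [mulL, mulR, ← mul_assoc, Algebra.TensorProduct.tmul_mul_tmul],
      hinner, sw_congr (μ' := (LinearMap.mul k H).compr₂ (TensorProduct.mk k H H 1))
        (f' := antipode k) (g' := LinearMap.id) fun _ _ => by
          simp [mulL, Algebra.TensorProduct.tmul_mul_tmul],
      sw_compr₂, ← swMul, swMul_antipode_id]
    ext a
    simp [Algebra.algebraMap_eq_smul_one, Algebra.TensorProduct.one_def]
  exact (congrArg ofConv
    (left_inv_eq_right_inv (congrArg toConv hleft) LinearMap.comul_right_inv)).symm

theorem comul_antipode_eq_sum {ι : Type*} {a : H} {s : Finset ι} {u v : ι → H}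
    (h : comul (R := k) a = ∑ i ∈ s, u i ⊗ₜ[k] v i) :
    comul (R := k) (antipode k a) = ∑ i ∈ s, antipode k (v i) ⊗ₜ[k] antipode k (u i) := by
  rw [← LinearMap.comp_apply, comul_comp_antipode, sw_apply_of_comul_eq h]
  rfl

theorem antipode_star_antipode [StarRing k] [StarRing H] [StarModule k H]
    (hcounit_star : ∀ g : H, counit (R := k) (star g) = star (counit (R := k) g))
    (hcomul_star : ∀ (g : H) (n : ℕ) (u v : Fin n → H),
      comul (R := k) g = ∑ i, u i ⊗ₜ[k] v i →
      comul (R := k) (star g) = ∑ i, star (u i) ⊗ₜ[k] star (v i))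
    (a : H) : antipode k (star (antipode k a)) = star a := by
  let T : H →ₗ[k] H :=
    { toFun := fun b => antipode k (star (antipode k (star b)))
      map_add' := by simp
      map_smul' := by simp }
  have hT : toConv T * toConv (antipode k) = 1 := by
    ext b
    let r := ℛ k b
    have hstar := comul_star_eq_sum hcomul_star r.eq.symm
    rw [r.convMul_apply]
    calc ∑ i ∈ r.index, T (r.left i) * antipode k (r.right i)
        = antipode k
            (star (∑ i ∈ r.index, antipode k (star (r.left i)) * star (r.right i))) := by
          simp [T, star_sum, map_sum, antipode_mul_antidistrib]
      _ = (1 : WithConv (H →ₗ[k] H)) b := by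
          rw [HopfAlgebra.sum_antipode_mul_eq_smul ⟨r.index, _, _, hstar.symm⟩]
          simp [hcounit_star, Algebra.algebraMap_eq_smul_one, antipode_one]
  have hT_id : T = LinearMap.id :=
    congrArg ofConv (left_inv_eq_right_inv hT LinearMap.antipode_mul_id)
  simpa [T] using LinearMap.congr_fun hT_id (star a)

end Antipode

section Bimodule

variable {k : Type*} [CommRing k] {H : Type*} [Ring H] [HopfAlgebra k H]
  {A : Type*} [Ring A] [Algebra k A] {B : Type*} [Ring B] [Algebra k B]
  {E : Type*} [AddCommGroup E] [Module k E]

theorem IsMomentumMap.swMul_comp_antipode {act : H →ₗ[k] A →ₗ[k] A} {J : H →ₗ[k] A}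
    (hJ : IsMomentumMap k act J) :
    swMul k (J ∘ₗ antipode k) J = Algebra.linearMap k A ∘ₗ counit :=
  swMul_algHom_comp_antipode (AlgHom.ofLinearMap J hJ.map_one' hJ.map_mul')

theorem sw_comp_antipode_momLift {actB : H →ₗ[k] B →ₗ[k] B} {JB : H →ₗ[k] B}
    (hJB : IsMomentumMap k actB JB) (JA : H →ₗ[k] A)
    {lB : B →ₗ[k] E →ₗ[k] E} {rA : A →ₗ[k] E →ₗ[k] E}
    (hbim : IsBimodule k lB rA) (y : E) :
    sw k lB (JB ∘ₗ antipode k) (momLift k JB JA lB rA y) =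
      rA.flip y ∘ₗ JA ∘ₗ antipode k := by
  rw [momLift, ← sw_assoc lB (LinearMap.mul k B) lB lB _ _ _ fun _ _ _ => hbim.mul_lsmul _ _ _,
    ← swMul, hJB.swMul_comp_antipode, sw_counit_left]
  ext c
  simp [hbim.one_lsmul]

theorem inner_momLift_star_antipode [StarRing k] [StarRing H] [StarModule k H] [StarRing A]
    [StarRing B]
    (hcounit_star : ∀ g : H, counit (R := k) (star g) = star (counit (R := k) g))
    (hcomul_star : ∀ (g : H) (n : ℕ) (u v : Fin n → H),
      comul (R := k) g = ∑ i, u i ⊗ₜ[k] v i →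
      comul (R := k) (star g) = ∑ i, star (u i) ⊗ₜ[k] star (v i))
    {JA : H →ₗ[k] A} (hJAstar : ∀ g : H, JA (star g) = star (JA g))
    {JB : H →ₗ[k] B} (hJBstar : ∀ g : H, JB (star g) = star (JB g))
    {lB : B →ₗ[k] E →ₗ[k] E} {rA : A →ₗ[k] E →ₗ[k] E} (hbim : IsBimodule k lB rA)
    {ip : E → E → A} (hip_addl : ∀ x x' y : E, ip (x + x') y = ip x y + ip x' y)
    (hip_rsmull : ∀ (x y : E) (a : A), ip (rA a x) y = star a * ip x y)
    (hip_lsmul : ∀ (b : B) (x y : E), ip (lB b x) y = ip x (lB (star b) y))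
    (x w : E) {ι : Type*} {a : H} {s : Finset ι} {u v : ι → H}
    (h : comul (R := k) a = ∑ i ∈ s, u i ⊗ₜ[k] v i) :
    ip (momLift k JB JA lB rA x (star (antipode k a))) w
      = ∑ i ∈ s, JA (u i) * ip x (lB (JB (antipode k (v i))) w) := by
  have ip_sum (z : ι → E) : ip (∑ i ∈ s, z i) w = ∑ i ∈ s, ip (z i) w :=
    map_sum (AddMonoidHom.mk' (ip · w) fun z z' => hip_addl z z' w) z s
  rw [momLift, sw_apply_of_comul_eq (comul_star_eq_sum hcomul_star (comul_antipode_eq_sum h)),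
    ip_sum]
  refine Finset.sum_congr rfl fun i _ => ?_
  rw [LinearMap.comp_apply, LinearMap.comp_apply, LinearMap.flip_apply,
    antipode_star_antipode hcounit_star hcomul_star, hJAstar, hJBstar, ← hbim.lsmul_rsmul,
    hip_rsmull, hip_lsmul, star_star, star_star]

end Bimodule

theorem momLift_compatible_with_inner_product_general
    (k : Type*) [CommRing k] [StarRing k]
    {H : Type*} [Ring H] [HopfAlgebra k H] [StarRing H] [StarModule k H]
    {A : Type*} [Ring A] [Algebra k A] [StarRing A]
    {B : Type*} [Ring B] [Algebra k B] [StarRing B]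
    {E : Type*} [AddCommGroup E] [Module k E]
    (hcounit_star : ∀ g : H,
      Coalgebra.counit (R := k) (star g) = star (Coalgebra.counit (R := k) g))
    (hcomul_star : ∀ (g : H) (n : ℕ) (u v : Fin n → H),
      Coalgebra.comul (R := k) g = ∑ i, u i ⊗ₜ[k] v i →
      Coalgebra.comul (R := k) (star g) = ∑ i, star (u i) ⊗ₜ[k] star (v i))
    (actA : H →ₗ[k] A →ₗ[k] A)
    (actB : H →ₗ[k] B →ₗ[k] B)
    (JA : H →ₗ[k] A) (hJA : IsMomentumMap k actA JA)
    (hJAstar : ∀ g : H, JA (star g) = star (JA g))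
    (JB : H →ₗ[k] B) (hJB : IsMomentumMap k actB JB)
    (hJBstar : ∀ g : H, JB (star g) = star (JB g))
    (lB : B →ₗ[k] E →ₗ[k] E) (rA : A →ₗ[k] E →ₗ[k] E) (hbim : IsBimodule k lB rA)
    (ip : E → E → A)
    (hip_addl : ∀ x x' y : E, ip (x + x') y = ip x y + ip x' y)
    (hip_addr : ∀ x y y' : E, ip x (y + y') = ip x y + ip x y')
    (hip_rsmulr : ∀ (x y : E) (a : A), ip x (rA a y) = ip x y * a)
    (hip_rsmull : ∀ (x y : E) (a : A), ip (rA a x) y = star a * ip x y)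
    (hip_lsmul : ∀ (b : B) (x y : E), ip (lB b x) y = ip x (lB (star b) y)) :
    ∀ (h : H) (x y : E) (n : ℕ) (u v : Fin n → H),
      Coalgebra.comul (R := k) h = ∑ i, u i ⊗ₜ[k] v i →
      actA h (ip x y)
        = ∑ i, ip (momLift k JB JA lB rA x (star (HopfAlgebra.antipode (R := k) (u i))))
            (momLift k JB JA lB rA y (v i)) := by
  intro h x y n u v hΔ
  let ipx : E →ₗ[k] A :=
    { toFun := ip x
      map_add' := hip_addr x
      map_smul' := fun c w => by simpa [hbim.one_rsmul] using hip_rsmulr x w (c • 1) }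
  let μ : A →ₗ[k] E →ₗ[k] A := (LinearMap.mul k A).compl₂ ipx
  let ν : A →ₗ[k] B →ₗ[k] E →ₗ[k] A := (LinearMap.llcomp k E E A ∘ₗ μ).compl₂ lB
  calc actA h (ip x y)
      = sw k μ JA (rA.flip y ∘ₗ JA ∘ₗ antipode k) h := by
        rw [hJA.inner', swMul, sw_congr (μ' := μ) (g' := rA.flip y ∘ₗ JA ∘ₗ antipode k)]
        intro a b
        simp [μ, ipx, hip_rsmulr]
    _ = sw k μ JA (sw k lB (JB ∘ₗ antipode k) (momLift k JB JA lB rA y)) h := by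
        rw [sw_comp_antipode_momLift hJB JA hbim]
    _ = sw k LinearMap.id (sw k ν JA (JB ∘ₗ antipode k)) (momLift k JB JA lB rA y) h := by
        rw [sw_assoc LinearMap.id ν μ lB _ _ _ fun _ _ _ => rfl]
    _ = ∑ i, sw k ν JA (JB ∘ₗ antipode k) (u i) (momLift k JB JA lB rA y (v i)) :=
        sw_apply_of_comul_eq hΔ _ _ _
    _ = _ := Finset.sum_congr rfl fun i _ => by
        rw [inner_momLift_star_antipode hcounit_star hcomul_star hJAstar hJBstar hbim hip_addl
          hip_rsmull hip_lsmul x _ (ℛ k (u i)).eq.symm,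
          sw_apply_of_comul_eq (ℛ k (u i)).eq.symm]
        simp [ν, μ, ipx]

/-- In the `*`-setting, the lifted `H`-action
`h ▷ x = J^B(h₍₁₎) · x · J^A(S(h₍₂₎))` on a `(B,A)`-bimodule `E` with an `A`-valued inner
product `⟨·,·⟩` is compatible with the inner product:
`h ▷_A ⟨x,y⟩ = ⟨S(h₍₁₎)* ▷ x, h₍₂₎ ▷ y⟩` (stated for every Sweedler decomposition of
`Δ h`). -/
theorem momLift_compatible_with_inner_product
    (k : Type*) [CommRing k] [StarRing k]
    {H : Type*} [Ring H] [HopfAlgebra k H] [StarRing H] [StarModule k H]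
    {A : Type*} [Ring A] [Algebra k A] [StarRing A] [StarModule k A]
    {B : Type*} [Ring B] [Algebra k B] [StarRing B] [StarModule k B]
    {E : Type*} [AddCommGroup E] [Module k E]
    (hcounit_star : ∀ g : H,
      Coalgebra.counit (R := k) (star g) = star (Coalgebra.counit (R := k) g))
    (hcomul_star : ∀ (g : H) (n : ℕ) (u v : Fin n → H),
      Coalgebra.comul (R := k) g = ∑ i, u i ⊗ₜ[k] v i →
      Coalgebra.comul (R := k) (star g) = ∑ i, star (u i) ⊗ₜ[k] star (v i))
    (actA : H →ₗ[k] A →ₗ[k] A) (hactA : IsModuleAlgebraAction k actA)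
    (hstar_actA : ∀ (h : H) (a : A),
      star (actA h a) = actA (star (HopfAlgebra.antipode (R := k) h)) (star a))
    (actB : H →ₗ[k] B →ₗ[k] B) (hactB : IsModuleAlgebraAction k actB)
    (hstar_actB : ∀ (h : H) (b : B),
      star (actB h b) = actB (star (HopfAlgebra.antipode (R := k) h)) (star b))
    (JA : H →ₗ[k] A) (hJA : IsMomentumMap k actA JA)
    (hJAstar : ∀ g : H, JA (star g) = star (JA g))
    (JB : H →ₗ[k] B) (hJB : IsMomentumMap k actB JB)
    (hJBstar : ∀ g : H, JB (star g) = star (JB g))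
    (lB : B →ₗ[k] E →ₗ[k] E) (rA : A →ₗ[k] E →ₗ[k] E) (hbim : IsBimodule k lB rA)
    (ip : E → E → A)
    (hip_addl : ∀ x x' y : E, ip (x + x') y = ip x y + ip x' y)
    (hip_addr : ∀ x y y' : E, ip x (y + y') = ip x y + ip x y')
    (hip_rsmulr : ∀ (x y : E) (a : A), ip x (rA a y) = ip x y * a)
    (hip_rsmull : ∀ (x y : E) (a : A), ip (rA a x) y = star a * ip x y)
    (hip_star : ∀ x y : E, star (ip x y) = ip y x)
    (hip_nondeg : ∀ x : E, (∀ y : E, ip x y = 0) → x = 0)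
    (hip_lsmul : ∀ (b : B) (x y : E), ip (lB b x) y = ip x (lB (star b) y)) :
    ∀ (h : H) (x y : E) (n : ℕ) (u v : Fin n → H),
      Coalgebra.comul (R := k) h = ∑ i, u i ⊗ₜ[k] v i →
      actA h (ip x y)
        = ∑ i, ip (momLift k JB JA lB rA x (star (HopfAlgebra.antipode (R := k) (u i))))
            (momLift k JB JA lB rA y (v i)) :=
  momLift_compatible_with_inner_product_general k hcounit_star hcomul_star actA actB JA hJA hJAstar
    JB hJB hJBstar lB rA hbim ip hip_addl hip_addr hip_rsmulr hip_rsmull hip_lsmul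

end EquivariantMorita
end
end

section
/- Let H be a Hopf algebra over a commutative ring k, let A and B be unital associative k-algebras with left H-module algebra actions, and let E be an H-equivariant (B,A)-bimodule with H-action ▷. Then for every 𝖻 ∈ Gl(H,B), the formula h ▷^𝖻 x := 𝖻(h₁) · (h₂ ▷ x) again defines a left H-module structure on E ((gh) ▷^𝖻 x = g ▷^𝖻 (h ▷^𝖻 x) and 1_H ▷^𝖻 x = x) which is compatible with the bimodule structure: h ▷^𝖻 (b·x) = (h₁ ▷ b)·(h₂ ▷^𝖻 x) and h ▷^𝖻 (x·a) = (h₁ ▷^𝖻 x)·(h₂ ▷ a). -/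
open scoped TensorProduct

noncomputable section

/-!
Every axiom of the twisted action `h ▷^𝖻 x = 𝖻(h₍₁₎) · (h₍₂₎ ▷ x)` follows from one property of
`𝖻` after regrouping Sweedler indices by coassociativity: `1 ▷^𝖻 x = x` from `𝖻(1) = 1`,
multiplicativity from `𝖻(gh) = 𝖻(g₍₁₎)(g₍₂₎ ▷ 𝖻(h))` together with `Δ(gh) = Δg Δh`,
compatibility with the left `B`-action from the commutation rule
`(h₍₁₎ ▷ b) 𝖻(h₍₂₎) = 𝖻(h₍₁₎)(h₍₂₎ ▷ b)`, and compatibility with the right `A`-action from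
the commutation of the two actions on `E`.
-/

namespace EquivariantMorita

open TensorProduct

section Sweedler

variable {k : Type*} [CommRing k] {H : Type*} [AddCommGroup H] [Module k H] [Coalgebra k H]
variable {M N P M' N' Q : Type*}
  [AddCommGroup M] [Module k M] [AddCommGroup N] [Module k N] [AddCommGroup P] [Module k P]
  [AddCommGroup M'] [Module k M'] [AddCommGroup N'] [Module k N'] [AddCommGroup Q] [Module k Q]

variable (k) in
def swₗ (μ : M →ₗ[k] N →ₗ[k] P) (f : H →ₗ[k] M) : (H →ₗ[k] N) →ₗ[k] (H →ₗ[k] P) where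
  toFun := sw k μ f
  map_add' g g' := by ext; simp [sw, map_add_right]
  map_smul' c g := by ext; simp [sw, map_smul_right]

/-- Coassociativity: `U (ν (f h₍₁₎) (g h₍₂₎)) (g' h₍₃₎) = μ (f h₍₁₎) (ν' (g h₍₂₎) (g' h₍₃₎))`
whenever `U (ν m n) p = μ m (ν' n p)`. -/
lemma sw_sw (U : M' →ₗ[k] P →ₗ[k] Q) (ν : M →ₗ[k] N →ₗ[k] M')
    (μ : M →ₗ[k] N' →ₗ[k] Q) (ν' : N →ₗ[k] P →ₗ[k] N')
    (hc : ∀ m n p, U (ν m n) p = μ m (ν' n p))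
    (f : H →ₗ[k] M) (g : H →ₗ[k] N) (g' : H →ₗ[k] P) :
    sw k U (sw k ν f g) g' = sw k μ f (sw k ν' g g') := by
  have key : lift U ∘ₗ map (lift ν ∘ₗ map f g) g' ∘ₗ (TensorProduct.assoc k H H H).symm.toLinearMap
      = lift μ ∘ₗ map f (lift ν' ∘ₗ map g g') := by
    ext; simp [hc]
  ext h
  calc sw k U (sw k ν f g) g' h
      = lift U (map (lift ν ∘ₗ map f g) g' (Coalgebra.comul.rTensor H (Coalgebra.comul h))) := by
        simp [sw, LinearMap.comp_assoc]
    _ = lift μ (map f (lift ν' ∘ₗ map g g') (Coalgebra.comul.lTensor H (Coalgebra.comul h))) := by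
        rw [← Coalgebra.coassoc_symm_apply]
        exact LinearMap.congr_fun key _
    _ = sw k μ f (sw k ν' g g') h := by
        simp [sw, LinearMap.comp_assoc]

lemma lift_map_mul_tmul {A : Type*} [Ring A] [Algebra k A] (μ : M →ₗ[k] N →ₗ[k] P)
    (f : A →ₗ[k] M) (g : A →ₗ[k] N) (z : A ⊗[k] A) (c d : A) :
    lift μ (map f g (z * c ⊗ₜ d))
      = lift μ (map (f ∘ₗ LinearMap.mulRight k c) (g ∘ₗ LinearMap.mulRight k d) z) := by
  rw [← LinearMap.mulRight_apply (R := k), LinearMap.mulRight_tmul, map_comp,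
    LinearMap.comp_apply]

end Sweedler

section Twisted

variable {k : Type*} [CommRing k] {H : Type*} [Ring H] [HopfAlgebra k H]
variable {A : Type*} [Ring A] [Algebra k A] {B : Type*} [Ring B] [Algebra k B]
variable {E : Type*} [AddCommGroup E] [Module k E]
variable {actA : H →ₗ[k] A →ₗ[k] A} {actB : H →ₗ[k] B →ₗ[k] B}
  {lB : B →ₗ[k] E →ₗ[k] E} {rA : A →ₗ[k] E →ₗ[k] E} {actE : H →ₗ[k] E →ₗ[k] E}
  {b : H →ₗ[k] B}

variable (k) in
def twistedAction (lB : B →ₗ[k] E →ₗ[k] E) (b : H →ₗ[k] B) (actE : H →ₗ[k] E →ₗ[k] E) :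
    H →ₗ[k] E →ₗ[k] E :=
  (swₗ k lB b ∘ₗ actE.flip).flip

lemma twistedAction_apply (h : H) (x : E) :
    twistedAction k lB b actE h x = sw k lB b (actE.flip x) h := rfl

lemma flip_twistedAction (x : E) :
    (twistedAction k lB b actE).flip x = sw k lB b (actE.flip x) := rfl

lemma IsBimodule.sw_swMul (hbim : IsBimodule k lB rA) (f g : H →ₗ[k] B) (e : H →ₗ[k] E) :
    sw k lB (swMul k f g) e = sw k lB f (sw k lB g e) :=
  sw_sw _ _ _ _ hbim.mul_lsmul f g e

lemma IsBimodule.sw_flip_sw (hbim : IsBimodule k lB rA) (f : H →ₗ[k] B) (e : H →ₗ[k] E)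
    (a : H →ₗ[k] A) :
    sw k rA.flip (sw k lB f e) a = sw k lB f (sw k rA.flip e a) :=
  sw_sw _ _ _ _ (fun b e a => hbim.lsmul_rsmul b a e) f e a

lemma IsEquivariantBimodule.flip_lsmul (heq : IsEquivariantBimodule k actB actA lB rA actE)
    (b' : B) (x : E) : actE.flip (lB b' x) = sw k lB (actB.flip b') (actE.flip x) :=
  LinearMap.ext fun h => heq.act_lsmul h b' x

lemma IsEquivariantBimodule.flip_rsmul (heq : IsEquivariantBimodule k actB actA lB rA actE)
    (a : A) (x : E) : actE.flip (rA a x) = sw k rA.flip (actE.flip x) (actA.flip a) :=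
  LinearMap.ext fun h => heq.act_rsmul h a x

lemma IsEquivariantBimodule.flip_comp_mulRight
    (heq : IsEquivariantBimodule k actB actA lB rA actE) (d : H) (x : E) :
    actE.flip x ∘ₗ LinearMap.mulRight k d = actE.flip (actE d x) :=
  LinearMap.ext fun h => heq.mul_act h d x

lemma MemGl.comp_mulRight (hb : MemGl k actB b) (c : H) :
    b ∘ₗ LinearMap.mulRight k c = swMul k b (actB.flip (b c)) :=
  LinearMap.ext fun h => hb.map_mul' h c

lemma MemGl.swMul_flip_comm (hb : MemGl k actB b) (b' : B) :
    swMul k (actB.flip b') b = swMul k b (actB.flip b') :=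
  LinearMap.ext fun h => hb.comm' h b'

lemma twistedAction_one (hbim : IsBimodule k lB rA)
    (heq : IsEquivariantBimodule k actB actA lB rA actE) (hb : MemGl k actB b) (x : E) :
    twistedAction k lB b actE 1 x = x := by
  change lift lB (map b (actE.flip x) (Coalgebra.comul 1)) = x
  simp [Algebra.TensorProduct.one_def, hb.map_one', heq.one_act, hbim.one_lsmul]

lemma twistedAction_mul (hbim : IsBimodule k lB rA)
    (heq : IsEquivariantBimodule k actB actA lB rA actE) (hb : MemGl k actB b)
    (g h : H) (x : E) :
    twistedAction k lB b actE (g * h) x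
      = twistedAction k lB b actE g (twistedAction k lB b actE h x) := by
  set T := twistedAction k lB b actE
  -- `Δ(gh) = Δg Δh`: prove the identity with `Δh` replaced by an arbitrary tensor `z`
  suffices key : ∀ z : H ⊗[k] H, lift lB (map b (actE.flip x) (Coalgebra.comul g * z))
      = T g (lift lB (map b (actE.flip x) z)) from
    (congrArg (fun w => lift lB (map b (actE.flip x) w)) (Bialgebra.comul_mul g h)).trans
      (key (Coalgebra.comul h))
  intro z
  induction z using TensorProduct.induction_on with
  | zero => simp
  | add z w hz hw => simp only [mul_add, map_add, hz, hw]
  | tmul c d =>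
    calc lift lB (map b (actE.flip x) (Coalgebra.comul g * c ⊗ₜ d))
        = sw k lB (b ∘ₗ LinearMap.mulRight k c) (actE.flip x ∘ₗ LinearMap.mulRight k d) g :=
          lift_map_mul_tmul _ _ _ _ _ _
      _ = sw k lB (swMul k b (actB.flip (b c))) (actE.flip (actE d x)) g := by
          rw [hb.comp_mulRight, heq.flip_comp_mulRight]
      _ = T g (lift lB (map b (actE.flip x) (c ⊗ₜ d))) := by
          rw [hbim.sw_swMul, ← heq.flip_lsmul, ← twistedAction_apply]
          rfl

lemma twistedAction_lsmul (hbim : IsBimodule k lB rA)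
    (heq : IsEquivariantBimodule k actB actA lB rA actE) (hb : MemGl k actB b)
    (h : H) (b' : B) (x : E) :
    twistedAction k lB b actE h (lB b' x)
      = sw k lB (actB.flip b') ((twistedAction k lB b actE).flip x) h := by
  rw [twistedAction_apply, heq.flip_lsmul, ← hbim.sw_swMul, ← hb.swMul_flip_comm,
    hbim.sw_swMul, flip_twistedAction]

lemma twistedAction_rsmul (hbim : IsBimodule k lB rA)
    (heq : IsEquivariantBimodule k actB actA lB rA actE) (h : H) (a : A) (x : E) :
    twistedAction k lB b actE h (rA a x)
      = sw k rA.flip ((twistedAction k lB b actE).flip x) (actA.flip a) h := by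
  rw [twistedAction_apply, heq.flip_rsmul, ← hbim.sw_flip_sw, flip_twistedAction]

end Twisted

theorem twisted_action_isEquivariantBimodule_general
    (k : Type*) [CommRing k]
    {H : Type*} [Ring H] [HopfAlgebra k H]
    {A : Type*} [Ring A] [Algebra k A]
    {B : Type*} [Ring B] [Algebra k B]
    {E : Type*} [AddCommGroup E] [Module k E]
    (actA : H →ₗ[k] A →ₗ[k] A)
    (actB : H →ₗ[k] B →ₗ[k] B)
    (lB : B →ₗ[k] E →ₗ[k] E) (rA : A →ₗ[k] E →ₗ[k] E) (hbim : IsBimodule k lB rA)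
    (actE : H →ₗ[k] E →ₗ[k] E)
    (heq : IsEquivariantBimodule k actB actA lB rA actE)
    (b : H →ₗ[k] B) (hb : MemGl k actB b) :
    ∃ actE' : H →ₗ[k] E →ₗ[k] E,
      (∀ (h : H) (x : E), actE' h x = sw k lB b (actE.flip x) h)
        ∧ IsEquivariantBimodule k actB actA lB rA actE' :=
  ⟨twistedAction k lB b actE, twistedAction_apply,
    { mul_act := twistedAction_mul hbim heq hb
      one_act := twistedAction_one hbim heq hb
      act_lsmul := twistedAction_lsmul hbim heq hb
      act_rsmul := twistedAction_rsmul hbim heq }⟩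

/-- If `E` is an `H`-equivariant `(B,A)`-bimodule with action `▷` and
`𝖻 ∈ Gl(H,B)`, then `h ▷^𝖻 x := 𝖻(h₍₁₎) · (h₍₂₎ ▷ x)` again defines a left `H`-module
structure on `E` compatible with the bimodule structure. -/
theorem twisted_action_isEquivariantBimodule
    (k : Type*) [CommRing k]
    {H : Type*} [Ring H] [HopfAlgebra k H]
    {A : Type*} [Ring A] [Algebra k A]
    {B : Type*} [Ring B] [Algebra k B]
    {E : Type*} [AddCommGroup E] [Module k E]
    (actA : H →ₗ[k] A →ₗ[k] A) (hactA : IsModuleAlgebraAction k actA)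
    (actB : H →ₗ[k] B →ₗ[k] B) (hactB : IsModuleAlgebraAction k actB)
    (lB : B →ₗ[k] E →ₗ[k] E) (rA : A →ₗ[k] E →ₗ[k] E) (hbim : IsBimodule k lB rA)
    (actE : H →ₗ[k] E →ₗ[k] E)
    (heq : IsEquivariantBimodule k actB actA lB rA actE)
    (b : H →ₗ[k] B) (hb : MemGl k actB b) :
    ∃ actE' : H →ₗ[k] E →ₗ[k] E,
      (∀ (h : H) (x : E), actE' h x = sw k lB b (actE.flip x) h)
        ∧ IsEquivariantBimodule k actB actA lB rA actE' :=
  twisted_action_isEquivariantBimodule_general k actA actB lB rA hbim actE heq b hb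

end EquivariantMorita
end
end

section
/- Let H be a Hopf algebra over a commutative ring k, let A and B be unital associative k-algebras with left H-module algebra actions, and let E and E' be H-equivariant (B,A)-bimodules whose left-multiplication maps B → End_A(E) and B → End_A(E') are bijections onto the right-A-linear endomorphisms. Let J be a momentum map for the action on A. If there exists an H-equivariant bimodule isomorphism Φ : E → E' (a bijective map that is left B-linear, right A-linear, and satisfies Φ(h ▷ x) = h ▷ Φ(x)), then the induced maps coincide: h_E(J) = h_{E'}(J), where h_E(J) : H → B is the unique map with h_E(J)(g) · x = (g₁ ▷ x) · J(g₂) for all x ∈ E, and similarly for h_{E'}(J). -/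
open scoped TensorProduct

noncomputable section

namespace EquivariantMorita

/-- If `E` and `E'` are isomorphic `H`-equivariant `(B,A)`-bimodules
(via an `H`-equivariant bimodule isomorphism `Φ`), both with bijective left-multiplication
maps `B → End_A(E)`, and `J` is a momentum map for the action on `A`, then the induced
maps coincide: `h_E(J) = h_{E'}(J)`. -/
theorem induced_map_eq_of_equivariant_iso
    (k : Type*) [CommRing k]
    {H : Type*} [Ring H] [HopfAlgebra k H]
    {A : Type*} [Ring A] [Algebra k A]
    {B : Type*} [Ring B] [Algebra k B]
    {E : Type*} [AddCommGroup E] [Module k E]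
    {E' : Type*} [AddCommGroup E'] [Module k E']
    (actA : H →ₗ[k] A →ₗ[k] A) (hactA : IsModuleAlgebraAction k actA)
    (actB : H →ₗ[k] B →ₗ[k] B) (hactB : IsModuleAlgebraAction k actB)
    (lB : B →ₗ[k] E →ₗ[k] E) (rA : A →ₗ[k] E →ₗ[k] E) (hbim : IsBimodule k lB rA)
    (actE : H →ₗ[k] E →ₗ[k] E)
    (heq : IsEquivariantBimodule k actB actA lB rA actE)
    (hinj : ∀ b b' : B, (∀ x : E, lB b x = lB b' x) → b = b')
    (hsurj : ∀ φ : E →ₗ[k] E, (∀ (a : A) (x : E), φ (rA a x) = rA a (φ x)) →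
      ∃ b : B, ∀ x : E, φ x = lB b x)
    (lB' : B →ₗ[k] E' →ₗ[k] E') (rA' : A →ₗ[k] E' →ₗ[k] E')
    (hbim' : IsBimodule k lB' rA')
    (actE' : H →ₗ[k] E' →ₗ[k] E')
    (heq' : IsEquivariantBimodule k actB actA lB' rA' actE')
    (hinj' : ∀ b b' : B, (∀ x : E', lB' b x = lB' b' x) → b = b')
    (hsurj' : ∀ φ : E' →ₗ[k] E', (∀ (a : A) (x : E'), φ (rA' a x) = rA' a (φ x)) →
      ∃ b : B, ∀ x : E', φ x = lB' b x)
    (J : H →ₗ[k] A) (hJ : IsMomentumMap k actA J)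
    (Φ : E →ₗ[k] E') (hbij : Function.Bijective Φ)
    (hΦl : ∀ (b : B) (x : E), Φ (lB b x) = lB' b (Φ x))
    (hΦr : ∀ (a : A) (x : E), Φ (rA a x) = rA' a (Φ x))
    (hΦH : ∀ (h : H) (x : E), Φ (actE h x) = actE' h (Φ x)) :
    ∀ h1 h2 : H →ₗ[k] B,
      (∀ (g : H) (x : E), lB (h1 g) x = sw k rA.flip (actE.flip x) J g) →
      (∀ (g : H) (x : E'), lB' (h2 g) x = sw k rA'.flip (actE'.flip x) J g) →
      h1 = h2 := by
  intro h1 h2 H1 H2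
  ext g
  apply hinj'
  intro x'
  obtain ⟨x, rfl⟩ := hbij.2 x'
  rw [← hΦl, H1, H2]
  have key : Φ ∘ₗ (TensorProduct.lift rA.flip ∘ₗ TensorProduct.map (actE.flip x) J)
      = TensorProduct.lift rA'.flip ∘ₗ TensorProduct.map (actE'.flip (Φ x)) J := by
    apply TensorProduct.ext'
    intro h a
    simp [hΦr, hΦH]
  have := LinearMap.congr_fun key ((Coalgebra.comul : H →ₗ[k] H ⊗[k] H) g)
  simpa [sw, LinearMap.comp_apply] using this

end EquivariantMorita
end
end
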